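/- arXiv:2403.17292 — 8 statements merged into one kernel-verified Lean document; each statement's English description precedes it below -/
import Mathlib

section
/- The sum of the elements of a nonempty set of distinct, pairwise non-consecutive Fibonacci numbers whose largest element is F_j is strictly less than F_{j+1}. -/
lemma zeckendorf_aux (n : ℕ) : ∀ (S : Finset ℕ) (hne : S.Nonempty),
    S.max' hne ≤ n → (∀ i ∈ S, 2 ≤ i) → (∀ i ∈ S, i + 1 ∉ S) →
    ∑ i ∈ S, Nat.fib i < Nat.fib (S.max' hne + 1) := by
  induction n using Nat.strong_induction_on with
  | _ n ih =>
    intro S hne hle h2 hcons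
    set j := S.max' hne with hj
    have hjS : j ∈ S := S.max'_mem hne
    have h2j : 2 ≤ j := h2 j hjS
    have hfib : Nat.fib (j + 1) = Nat.fib (j - 1) + Nat.fib j := by
      have : j - 1 + 2 = j + 1 := by omega
      have := Nat.fib_add_two (n := j - 1)
      rw [show j - 1 + 2 = j + 1 by omega, show j - 1 + 1 = j by omega] at this
      exact this
    have hsum : ∑ i ∈ S, Nat.fib i = Nat.fib j + ∑ i ∈ S.erase j, Nat.fib i :=
      (Finset.add_sum_erase _ _ hjS).symm
    rcases (S.erase j).eq_empty_or_nonempty with he | hne'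
    · rw [hsum, he, Finset.sum_empty, Nat.add_zero, hfib]
      have : 1 ≤ Nat.fib (j - 1) := Nat.fib_pos.2 (by omega)
      omega
    · set j' := (S.erase j).max' hne' with hj'
      have hj'S : j' ∈ S := Finset.mem_of_mem_erase ((S.erase j).max'_mem hne')
      have hj'ne : j' ≠ j := Finset.ne_of_mem_erase ((S.erase j).max'_mem hne')
      have hj'lt : j' < j := lt_of_le_of_ne (S.le_max' _ hj'S) hj'ne
      have hj'1 : j' + 1 ≠ j := fun h => hcons j' hj'S (h ▸ hjS)
      have hj'le : j' + 1 ≤ j - 1 := by omega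
      have hmono : Nat.fib (j' + 1) ≤ Nat.fib (j - 1) := Nat.fib_mono hj'le
      have ihS : ∑ i ∈ S.erase j, Nat.fib i < Nat.fib (j' + 1) := by
        refine ih (j - 1) (by omega) _ hne' (by omega)
          (fun i hi => h2 i (Finset.mem_of_mem_erase hi))
          (fun i hi h => hcons i (Finset.mem_of_mem_erase hi) (Finset.mem_of_mem_erase h))
      rw [hsum, hfib]
      omega

theorem zeckendorf_sum_lt (S : Finset ℕ) (hne : S.Nonempty)
    (h2 : ∀ i ∈ S, 2 ≤ i) (hcons : ∀ i ∈ S, i + 1 ∉ S) :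
    ∑ i ∈ S, Nat.fib i < Nat.fib (S.max' hne + 1) := by
  exact zeckendorf_aux (S.max' hne) S hne le_rfl h2 hcons
end

section
/- The Zeckendorf representation of a positive integer is unique: if S and T are two finite sets of indices (each index ≥ 2), each with no two consecutive indices, and Σ_{i∈S} F_i = Σ_{i∈T} F_i, then S = T. -/
theorem zeck_bound : ∀ n (S : Finset ℕ), (∀ i ∈ S, 2 ≤ i) → (∀ i ∈ S, i + 1 ∉ S) →
    (∀ i ∈ S, i ≤ n) → ∑ i ∈ S, Nat.fib i < Nat.fib (n + 1) := by
  intro n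
  induction n using Nat.strong_induction_on with
  | _ n ih =>
    intro S h2 hc hle
    by_cases hn : n ∈ S
    · have hn2 : 2 ≤ n := h2 n hn
      have key : ∀ i ∈ S.erase n, i ≤ n - 2 := by
        intro i hi
        have hiS := Finset.mem_of_mem_erase hi
        have hne := Finset.ne_of_mem_erase hi
        have hne1 : i ≠ n - 1 := by
          intro h
          subst h
          have : (n - 1) + 1 ∈ S := by rwa [Nat.sub_add_cancel (by omega)]
          exact hc _ hiS this
        have := hle i hiS
        omega
      have ih' := ih (n - 2) (by omega) (S.erase n)
        (fun i hi => h2 i (Finset.mem_of_mem_erase hi))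
        (fun i hi hin => hc i (Finset.mem_of_mem_erase hi) (Finset.mem_of_mem_erase hin)) key
      have hsum : ∑ i ∈ S, Nat.fib i = Nat.fib n + ∑ i ∈ S.erase n, Nat.fib i :=
        (Finset.add_sum_erase _ _ hn).symm
      have hfib : Nat.fib (n - 2 + 1) + Nat.fib n = Nat.fib (n + 1) := by
        rw [show n - 2 + 1 = n - 1 by omega, show n + 1 = (n - 1) + 2 by omega,
          Nat.fib_add_two, show n - 1 + 1 = n by omega]
      omega
    · rcases Nat.eq_zero_or_pos n with h0 | hpos
      · subst h0
        have hS : S = ∅ := Finset.eq_empty_of_forall_notMem (fun i hi => by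
          have := h2 i hi; have := hle i hi; omega)
        simp [hS]
      · have ih' := ih (n - 1) (by omega) S h2 hc (fun i hi => by
          have := hle i hi
          have : i ≠ n := fun h => hn (h ▸ hi)
          omega)
        have := Nat.fib_mono (show n - 1 + 1 ≤ n + 1 by omega)
        omega

theorem zeck_aux : ∀ k (S T : Finset ℕ), (∀ i ∈ S, 2 ≤ i) → (∀ i ∈ S, i + 1 ∉ S) →
    (∀ i ∈ T, 2 ≤ i) → (∀ i ∈ T, i + 1 ∉ T) →
    (∑ i ∈ S, Nat.fib i = ∑ i ∈ T, Nat.fib i) → (∑ i ∈ S, Nat.fib i = k) → S = T := by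
  intro k
  induction k using Nat.strong_induction_on with
  | _ k ih =>
    intro S T hS2 hSc hT2 hTc hsum hk
    rcases Finset.eq_empty_or_nonempty S with hS | hS
    · subst hS
      simp only [Finset.sum_empty] at hsum
      symm
      apply Finset.eq_empty_of_forall_notMem
      intro i hi
      have h1 : Nat.fib i = 0 := by
        have := (Finset.sum_eq_zero_iff).mp hsum.symm i hi
        exact this
      have : 0 < Nat.fib i := Nat.fib_pos.mpr (by have := hT2 i hi; omega)
      omega
    · have hT : T.Nonempty := by
        rcases Finset.eq_empty_or_nonempty T with hT | hT
        · exfalso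
          subst hT
          simp only [Finset.sum_empty] at hsum
          obtain ⟨i, hi⟩ := hS
          have h1 := (Finset.sum_eq_zero_iff).mp hsum i hi
          have : 0 < Nat.fib i := Nat.fib_pos.mpr (by have := hS2 i hi; omega)
          omega
        · exact hT
      set a := S.max' hS with ha
      set b := T.max' hT with hb
      have haS : a ∈ S := S.max'_mem hS
      have hbT : b ∈ T := T.max'_mem hT
      have hSa : ∑ i ∈ S, Nat.fib i < Nat.fib (a + 1) :=
        zeck_bound a S hS2 hSc (fun i hi => S.le_max' i hi)
      have hTb : ∑ i ∈ T, Nat.fib i < Nat.fib (b + 1) :=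
        zeck_bound b T hT2 hTc (fun i hi => T.le_max' i hi)
      have hfa : Nat.fib a ≤ ∑ i ∈ S, Nat.fib i :=
        Finset.single_le_sum (fun i _ => Nat.zero_le _) haS
      have hfb : Nat.fib b ≤ ∑ i ∈ T, Nat.fib i :=
        Finset.single_le_sum (fun i _ => Nat.zero_le _) hbT
      have hab : a = b := by
        by_contra hne
        rcases Nat.lt_or_ge a b with h | h
        · have := Nat.fib_mono (show a + 1 ≤ b by omega)
          omega
        · have := Nat.fib_mono (show b + 1 ≤ a by omega)
          omega
      rw [← hab] at hbT
      have hSsum : ∑ i ∈ S, Nat.fib i = Nat.fib a + ∑ i ∈ S.erase a, Nat.fib i :=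
        (Finset.add_sum_erase _ _ haS).symm
      have hTsum : ∑ i ∈ T, Nat.fib i = Nat.fib a + ∑ i ∈ T.erase a, Nat.fib i :=
        (Finset.add_sum_erase _ _ hbT).symm
      have hfapos : 0 < Nat.fib a := Nat.fib_pos.mpr (by have := hS2 a haS; omega)
      have heq : S.erase a = T.erase a := by
        apply ih (∑ i ∈ S.erase a, Nat.fib i) (by omega)
        · exact fun i hi => hS2 i (Finset.mem_of_mem_erase hi)
        · exact fun i hi hin => hSc i (Finset.mem_of_mem_erase hi) (Finset.mem_of_mem_erase hin)
        · exact fun i hi => hT2 i (Finset.mem_of_mem_erase hi)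
        · exact fun i hi hin => hTc i (Finset.mem_of_mem_erase hi) (Finset.mem_of_mem_erase hin)
        · omega
        · rfl
      have : S = insert a (S.erase a) := (Finset.insert_erase haS).symm
      rw [this, heq, Finset.insert_erase hbT]

theorem zeckendorf_unique (S T : Finset ℕ)
    (hS2 : ∀ i ∈ S, 2 ≤ i) (hScons : ∀ i ∈ S, i + 1 ∉ S)
    (hT2 : ∀ i ∈ T, 2 ≤ i) (hTcons : ∀ i ∈ T, i + 1 ∉ T)
    (hsum : ∑ i ∈ S, Nat.fib i = ∑ i ∈ T, Nat.fib i) :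
    S = T := by
  exact zeck_aux _ S T hS2 hScons hT2 hTcons hsum rfl
end

section
/- Every natural number n with 0 ≤ n < L_k (k ≥ 1) can be written as n = Σ_{i=0}^{k−1} α_i L_i with α_i ∈ {0,1}, α_i α_{i+1} = 0 for all i, and α_0 α_2 = 0. -/
def lucas : ℕ → ℕ
  | 0 => 2
  | 1 => 1
  | (n + 2) => lucas (n + 1) + lucas n

/-!
Greedy choice: if `L_{k+1} ≤ n < L_{k+2} = L_{k+1} + L_k`, then `n - L_{k+1} < L_k` has a
representation using only `L_0, …, L_{k-1}`, and adding `L_{k+1}` to it creates no forbidden pair.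
The pair `L_0, L_2` could only appear for `k = 1`, where the remainder is `0`.
-/

open Finset Function

structure IsLucasRep (k n : ℕ) (α : ℕ → ℕ) : Prop where
  le_one : ∀ i, α i ≤ 1
  mul_succ_eq_zero : ∀ i, α i * α (i + 1) = 0
  zero_mul_two_eq_zero : α 0 * α 2 = 0
  eq_zero_of_le : ∀ i, k ≤ i → α i = 0
  sum_eq : ∑ i ∈ range k, α i * lucas i = n

namespace IsLucasRep

variable {k n : ℕ} {α : ℕ → ℕ}

theorem zero (k : ℕ) : IsLucasRep k 0 0 :=
  ⟨by simp, by simp, by simp, by simp, by simp⟩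

theorem mono {l : ℕ} (h : IsLucasRep k n α) (hkl : k ≤ l) : IsLucasRep l n α where
  le_one := h.le_one
  mul_succ_eq_zero := h.mul_succ_eq_zero
  zero_mul_two_eq_zero := h.zero_mul_two_eq_zero
  eq_zero_of_le i hi := h.eq_zero_of_le i (hkl.trans hi)
  sum_eq := by
    rw [← h.sum_eq]
    refine (sum_subset (range_subset_range.2 hkl) fun i _ hi => ?_).symm
    rw [h.eq_zero_of_le i (by simpa using hi), zero_mul]

theorem mul_lucas_le (h : IsLucasRep k n α) (i : ℕ) : α i * lucas i ≤ n := by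
  by_cases hi : i < k
  · rw [← h.sum_eq]
    exact single_le_sum (f := fun i => α i * lucas i) (fun _ _ => Nat.zero_le _)
      (mem_range.2 hi)
  · rw [h.eq_zero_of_le i (not_lt.1 hi), zero_mul]
    exact Nat.zero_le n

theorem update_succ (h : IsLucasRep k n α) (hn : n < lucas k) :
    IsLucasRep (k + 2) (n + lucas (k + 1)) (update α (k + 1) 1) where
  le_one i := by
    rcases eq_or_ne i (k + 1) with rfl | hi
    · simp
    · simpa [hi] using h.le_one i
  mul_succ_eq_zero i := by
    rcases eq_or_ne i (k + 1) with rfl | hi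
    · simp [h.eq_zero_of_le (k + 2) (by omega)]
    · rcases eq_or_ne i k with rfl | hik
      · simp [h.eq_zero_of_le i le_rfl]
      · simpa [hi, hik] using h.mul_succ_eq_zero i
  zero_mul_two_eq_zero := by
    rcases eq_or_ne k 1 with rfl | hk
    · have : α 0 * 2 ≤ n := h.mul_lucas_le 0
      have : n < 1 := hn
      rw [update_of_ne (by omega), update_self, mul_one]
      omega
    · simpa [update_of_ne (show 2 ≠ k + 1 by omega)] using h.zero_mul_two_eq_zero
  eq_zero_of_le i hi := by
    rw [update_of_ne (by omega)]
    exact h.eq_zero_of_le i (by omega)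
  sum_eq := by
    have h_low : ∑ i ∈ range k, update α (k + 1) 1 i * lucas i = n := by
      rw [← h.sum_eq]
      refine sum_congr rfl fun i hi => ?_
      rw [update_of_ne (by grind)]
    rw [sum_range_succ, sum_range_succ, h_low, update_of_ne (by omega),
      h.eq_zero_of_le k le_rfl]
    simp

end IsLucasRep

theorem exists_isLucasRep_of_lt_lucas_succ (j : ℕ) :
    ∀ n < lucas (j + 1), ∃ α, IsLucasRep (j + 1) n α := by
  induction j using Nat.twoStepInduction with
  | zero =>
    intro n hn
    obtain rfl : n = 0 := by simpa [lucas] using hn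
    exact ⟨0, .zero 1⟩
  | one =>
    intro n hn
    have : n < 3 := hn
    interval_cases n
    · exact ⟨0, .zero 2⟩
    · exact ⟨_, (IsLucasRep.zero 0).update_succ (by simp [lucas])⟩
    · refine ⟨update 0 0 1, ⟨fun i => ?_, fun i => ?_, by simp, fun i hi => ?_, ?_⟩⟩
      · rcases eq_or_ne i 0 with rfl | hi <;> simp [*]
      · rcases eq_or_ne i 0 with rfl | hi <;> simp [*]
      · simp [show i ≠ 0 by omega]
      · simp [sum_range_succ, lucas]
  | more j ih₀ ih₁ =>
    intro n hn
    have hn' : n < lucas (j + 2) + lucas (j + 1) := hn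
    by_cases hsmall : n < lucas (j + 2)
    · obtain ⟨α, hα⟩ := ih₁ n hsmall
      exact ⟨α, hα.mono (by omega)⟩
    · obtain ⟨α, hα⟩ := ih₀ (n - lucas (j + 2)) (by omega)
      have hrep := hα.update_succ (by omega)
      rw [Nat.sub_add_cancel (by omega)] at hrep
      exact ⟨_, hrep⟩

theorem lucas_zeckendorf_existence (k : ℕ) (hk : 1 ≤ k) (n : ℕ) (hn : n < lucas k) :
    ∃ α : ℕ → ℕ,
      (∀ i, α i ≤ 1) ∧
      (∀ i, α i * α (i + 1) = 0) ∧
      α 0 * α 2 = 0 ∧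
      n = ∑ i ∈ Finset.range k, α i * lucas i := by
  obtain ⟨j, rfl⟩ := Nat.exists_eq_add_of_le' hk
  obtain ⟨α, hα⟩ := exists_isLucasRep_of_lt_lucas_succ j n hn
  exact ⟨α, hα.le_one, hα.mul_succ_eq_zero, hα.zero_mul_two_eq_zero, hα.sum_eq.symm⟩
end

section
/- The Lucas–Zeckendorf representation is unique: if two finite sets S, T of nonnegative indices each contain no two consecutive indices, neither contains both 0 and 2, and Σ_{i∈S} L_i = Σ_{i∈T} L_i, then S = T. -/
lemma lucas_pos (n : ℕ) : 0 < lucas n := by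
  induction n using Nat.strong_induction_on with
  | _ n ih =>
    match n with
    | 0 => simp [lucas]
    | 1 => simp [lucas]
    | (n+2) =>
      have h1 := ih (n+1) (by omega)
      simp only [lucas]
      omega

lemma lucas_le_succ (n : ℕ) (h : 1 ≤ n) : lucas n ≤ lucas (n+1) := by
  obtain ⟨m, rfl⟩ : ∃ m, n = m + 1 := ⟨n - 1, by omega⟩
  have := lucas_pos m
  show lucas (m+1) ≤ lucas (m+2)
  simp only [lucas]
  omega

lemma lucas_mono {m n : ℕ} (hm : 1 ≤ m) (h : m ≤ n) : lucas m ≤ lucas n := by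
  induction n with
  | zero => omega
  | succ k ih =>
    rcases Nat.lt_or_ge m (k+1) with h' | h'
    · exact le_trans (ih (by omega)) (lucas_le_succ k (by omega))
    · have : m = k + 1 := by omega
      subst this
      rfl

lemma lucas_sum_lt (m : ℕ) : ∀ S : Finset ℕ, (∀ i ∈ S, i + 1 ∉ S) →
    ¬(0 ∈ S ∧ 2 ∈ S) → (∀ i ∈ S, i ≤ m) → 1 ≤ m →
    ∑ i ∈ S, lucas i < lucas (m+1) := by
  induction m using Nat.strong_induction_on with
  | _ m ih =>
    intro S hcons h02 hb hm
    by_cases hmem : m ∈ S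
    · rw [← Finset.add_sum_erase S lucas hmem]
      have hb' : ∀ i ∈ S.erase m, i ≤ m - 2 := by
        intro i hi
        have hiS := Finset.mem_of_mem_erase hi
        have hne := Finset.ne_of_mem_erase hi
        have h1 : i ≤ m := hb i hiS
        have h2 : i ≠ m - 1 := by
          intro h
          subst h
          exact hcons _ hiS (by rwa [Nat.sub_add_cancel hm])
        omega
      rcases Nat.lt_or_ge m 3 with h3 | h3
      · -- m = 1 or m = 2 : erase is empty
        have hempty : S.erase m = ∅ := by
          rw [Finset.eq_empty_iff_forall_notMem]
          intro i hi
          have hiS := Finset.mem_of_mem_erase hi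
          have hi2 := hb' i hi
          have hi0 : i = 0 := by omega
          subst hi0
          interval_cases m
          · exact hcons 0 hiS hmem
          · exact h02 ⟨hiS, hmem⟩
        rw [hempty]
        simp only [Finset.sum_empty, add_zero]
        interval_cases m
        · simp [lucas]
        · simp [lucas]
      · -- m ≥ 3
        have hrec := ih (m - 2) (by omega) (S.erase m)
          (fun i hi h => hcons i (Finset.mem_of_mem_erase hi)
            (Finset.mem_of_mem_erase h))
          (fun ⟨h0, h2⟩ => h02 ⟨Finset.mem_of_mem_erase h0, Finset.mem_of_mem_erase h2⟩)
          hb' (by omega)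
        have heq : lucas (m+1) = lucas m + lucas (m-1) := by
          obtain ⟨k, rfl⟩ : ∃ k, m = k + 1 := ⟨m - 1, by omega⟩
          simp [lucas]
        have heq2 : m - 2 + 1 = m - 1 := by omega
        rw [heq2] at hrec
        omega
    · -- m ∉ S
      have hb' : ∀ i ∈ S, i ≤ m - 1 := by
        intro i hi
        have := hb i hi
        have : i ≠ m := fun h => hmem (h ▸ hi)
        omega
      rcases Nat.lt_or_ge m 2 with h2 | h2
      · -- m = 1 : S ⊆ {0}
        have : m = 1 := by omega
        subst this
        have hsub : S ⊆ {0} := by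
          intro i hi
          have := hb' i hi
          simp only [Finset.mem_singleton]
          omega
        rcases Finset.subset_singleton_iff.mp hsub with rfl | rfl
        · simp [lucas]
        · simp [lucas]
      · have hrec := ih (m - 1) (by omega) S hcons h02 hb' (by omega)
        have heq : m - 1 + 1 = m := by omega
        rw [heq] at hrec
        exact lt_of_lt_of_le hrec (lucas_le_succ m (by omega))

lemma max_not_lt (S T : Finset ℕ)
    (hScons : ∀ i ∈ S, i + 1 ∉ S) (hS02 : ¬(0 ∈ S ∧ 2 ∈ S))
    (hTcons : ∀ i ∈ T, i + 1 ∉ T)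
    (hS : S.Nonempty) (hT : T.Nonempty)
    (hsum : ∑ i ∈ S, lucas i = ∑ i ∈ T, lucas i)
    (hlt : S.max' hS < T.max' hT) : False := by
  set m := S.max' hS with hm
  set n := T.max' hT with hn
  have hnT : n ∈ T := T.max'_mem hT
  have hTge : lucas n ≤ ∑ i ∈ T, lucas i :=
    Finset.single_le_sum (fun i _ => Nat.zero_le _) hnT
  rcases Nat.lt_or_ge m 1 with h0 | h1
  · -- m = 0, so S = {0}, sum S = 2
    have hm0 : m = 0 := by omega
    have hSsub : S ⊆ {0} := by
      intro i hi
      have := S.le_max' i hi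
      simp only [Finset.mem_singleton]
      omega
    have hSeq : S = {0} := by
      rcases Finset.subset_singleton_iff.mp hSsub with h | h
      · exact absurd h (Finset.nonempty_iff_ne_empty.mp hS)
      · exact h
    have hsumS : ∑ i ∈ S, lucas i = 2 := by rw [hSeq]; simp [lucas]
    rcases Nat.lt_or_ge n 2 with hn2 | hn2
    · -- n = 1, T = {1}, sum T = 1
      have hn1 : n = 1 := by omega
      have hTeq : T = {1} := by
        apply Finset.Subset.antisymm
        · intro i hi
          have h1 := T.le_max' i hi
          simp only [Finset.mem_singleton]
          have h1T : (1 : ℕ) ∈ T := hn1 ▸ hnT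
          have : i ≠ 0 := by
            intro h
            subst h
            exact hTcons 0 hi (by simpa using h1T)
          omega
        · simp only [Finset.singleton_subset_iff]
          rwa [← hn1]
      rw [hTeq] at hsum
      simp [lucas, hsumS] at hsum
    · have : (3 : ℕ) ≤ lucas n := by
        have := lucas_mono (m := 2) (by omega) hn2
        simpa [lucas] using this
      omega
  · -- m ≥ 1 : sum S < lucas (m+1) ≤ lucas n ≤ sum T
    have hb : ∀ i ∈ S, i ≤ m := fun i hi => S.le_max' i hi
    have h1' := lucas_sum_lt m S hScons hS02 hb h1
    have h2' : lucas (m+1) ≤ lucas n := lucas_mono (by omega) (by omega)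
    omega

lemma lucas_zeckendorf_aux : ∀ N : ℕ, ∀ S T : Finset ℕ,
    (∀ i ∈ S, i + 1 ∉ S) → ¬(0 ∈ S ∧ 2 ∈ S) →
    (∀ i ∈ T, i + 1 ∉ T) → ¬(0 ∈ T ∧ 2 ∈ T) →
    ∑ i ∈ S, lucas i = N → ∑ i ∈ T, lucas i = N → S = T := by
  intro N
  induction N using Nat.strong_induction_on with
  | _ N ih =>
    intro S T hScons hS02 hTcons hT02 hSsum hTsum
    rcases S.eq_empty_or_nonempty with rfl | hS
    · simp only [Finset.sum_empty] at hSsum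
      subst hSsum
      rcases T.eq_empty_or_nonempty with rfl | hT
      · rfl
      · obtain ⟨i, hi⟩ := hT
        have h1 : lucas i ≤ ∑ j ∈ T, lucas j :=
          Finset.single_le_sum (fun j _ => Nat.zero_le _) hi
        have := lucas_pos i
        omega
    rcases T.eq_empty_or_nonempty with rfl | hT
    · simp only [Finset.sum_empty] at hTsum
      obtain ⟨i, hi⟩ := hS
      have h1 : lucas i ≤ ∑ j ∈ S, lucas j :=
        Finset.single_le_sum (fun j _ => Nat.zero_le _) hi
      have := lucas_pos i
      omega
    have hmn : S.max' hS = T.max' hT := by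
      rcases lt_trichotomy (S.max' hS) (T.max' hT) with h | h | h
      · exact absurd h (fun h => max_not_lt S T hScons hS02 hTcons hS hT (hSsum.trans hTsum.symm) h)
      · exact h
      · exact absurd h (fun h => max_not_lt T S hTcons hT02 hScons hT hS (hTsum.trans hSsum.symm) h)
    set m := S.max' hS with hmdef
    have hmS : m ∈ S := S.max'_mem hS
    have hmT : m ∈ T := hmn ▸ T.max'_mem hT
    have hSsplit : lucas m + ∑ i ∈ S.erase m, lucas i = N := by
      rw [Finset.add_sum_erase S lucas hmS]; exact hSsum
    have hTsplit : lucas m + ∑ i ∈ T.erase m, lucas i = N := by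
      rw [Finset.add_sum_erase T lucas hmT]; exact hTsum
    have hpos := lucas_pos m
    have hkey : S.erase m = T.erase m := by
      apply ih (N - lucas m) (by omega)
      · exact fun i hi h => hScons i (Finset.mem_of_mem_erase hi) (Finset.mem_of_mem_erase h)
      · exact fun ⟨h0, h2⟩ => hS02 ⟨Finset.mem_of_mem_erase h0, Finset.mem_of_mem_erase h2⟩
      · exact fun i hi h => hTcons i (Finset.mem_of_mem_erase hi) (Finset.mem_of_mem_erase h)
      · exact fun ⟨h0, h2⟩ => hT02 ⟨Finset.mem_of_mem_erase h0, Finset.mem_of_mem_erase h2⟩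
      · omega
      · omega
    calc S = insert m (S.erase m) := (Finset.insert_erase hmS).symm
      _ = insert m (T.erase m) := by rw [hkey]
      _ = T := Finset.insert_erase hmT

theorem lucas_zeckendorf_unique (S T : Finset ℕ)
    (hScons : ∀ i ∈ S, i + 1 ∉ S) (hS02 : ¬(0 ∈ S ∧ 2 ∈ S))
    (hTcons : ∀ i ∈ T, i + 1 ∉ T) (hT02 : ¬(0 ∈ T ∧ 2 ∈ T))
    (hsum : ∑ i ∈ S, lucas i = ∑ i ∈ T, lucas i) :
    S = T := by
  exact lucas_zeckendorf_aux (∑ i ∈ T, lucas i) S T hScons hS02 hTcons hT02 hsum rfl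
end

section
/- For the k-bonacci sequence with initial values 2^i (0 ≤ i ≤ k−1), the maximal sum F(i) = Σ_{1 ≤ j ≤ i, k ∤ j} g_{i−j}^(k) of terms below g_i^(k) allowed in a k-Zeckendorf representation satisfies F(i) = g_i^(k) − 1 for all i ≥ 1. -/
private lemma two_pow_sum : ∀ i : ℕ, ∑ j ∈ Finset.Icc 1 i, 2 ^ (i - j) = 2 ^ i - 1 := by
  intro i
  induction i with
  | zero => simp
  | succ n ih =>
    rw [Finset.sum_Icc_succ_top (by omega)]
    have h1 : ∀ j ∈ Finset.Icc 1 n, 2 ^ (n + 1 - j) = 2 * 2 ^ (n - j) := by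
      intro j hj
      simp only [Finset.mem_Icc] at hj
      rw [show n + 1 - j = (n - j) + 1 by omega, pow_succ]
      ring
    rw [Finset.sum_congr rfl h1, ← Finset.mul_sum, ih]
    have h2 : 1 ≤ 2 ^ n := Nat.one_le_two_pow
    have h3 : 2 ^ (n + 1) = 2 * 2 ^ n := by rw [pow_succ]; ring
    simp only [Nat.sub_self, pow_zero]
    omega

theorem kbonacci_maximal_sum (k : ℕ) (hk : 2 ≤ k) (g : ℕ → ℕ)
    (hinit : ∀ i, i < k → g i = 2 ^ i)
    (hrec : ∀ n, k ≤ n → g n = ∑ j ∈ Finset.Icc 1 k, g (n - j)) :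
    ∀ i, 1 ≤ i →
      ∑ j ∈ (Finset.Icc 1 i).filter (fun j => ¬ k ∣ j), g (i - j) = g i - 1 := by
  have gpos : ∀ n, 1 ≤ g n := by
    intro n
    induction n using Nat.strong_induction_on with
    | _ n ih =>
      by_cases h : n < k
      · rw [hinit n h]; exact Nat.one_le_two_pow
      · push_neg at h
        rw [hrec n h]
        have h1 : (1 : ℕ) ∈ Finset.Icc 1 k := by simp; omega
        calc 1 ≤ g (n - 1) := ih (n - 1) (by omega)
          _ ≤ _ := Finset.single_le_sum (f := fun j => g (n - j)) (fun i _ => Nat.zero_le _) h1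
  have key : ∀ i, ∑ j ∈ (Finset.Icc 1 i).filter (fun j => ¬ k ∣ j), g (i - j) = g i - 1 := by
    intro i
    induction i using Nat.strong_induction_on with
    | _ i ih =>
      by_cases h : i < k
      · rw [Finset.filter_true_of_mem (fun j hj => ?_)]
        · have hc : ∀ j ∈ Finset.Icc 1 i, g (i - j) = 2 ^ (i - j) := by
            intro j hj
            simp only [Finset.mem_Icc] at hj
            exact hinit _ (by omega)
          rw [Finset.sum_congr rfl hc, two_pow_sum, hinit i h]
        · simp only [Finset.mem_Icc] at hj
          intro hd
          have := Nat.le_of_dvd (by omega) hd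
          omega
      · push_neg at h
        -- rewrite filtered sum as sum with if
        rw [Finset.sum_filter]
        set f : ℕ → ℕ := fun j => if ¬ k ∣ j then g (i - j) else 0 with hf
        have hsplit : ∑ j ∈ Finset.Icc 1 i, f j
            = ∑ j ∈ Finset.Icc 1 k, f j + ∑ j ∈ Finset.Ioc k i, f j := by
          have h1 : Finset.Icc 1 i = Finset.Ioc 0 i := by
            ext x; simp [Nat.lt_iff_add_one_le]
          have h2 : Finset.Icc 1 k = Finset.Ioc 0 k := by
            ext x; simp [Nat.lt_iff_add_one_le]
          rw [h1, h2, Finset.sum_Ioc_consecutive _ (by omega) h]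
        -- sum over Icc 1 k of f
        obtain ⟨m, hm⟩ : ∃ m, k = m + 1 := ⟨k - 1, by omega⟩
        have hA : ∑ j ∈ Finset.Icc 1 k, f j = ∑ j ∈ Finset.Icc 1 m, g (i - j) := by
          rw [hm, Finset.sum_Icc_succ_top (by omega)]
          have : f (m + 1) = 0 := by
            simp only [hf, ← hm]
            simp
          rw [this, add_zero]
          refine Finset.sum_congr rfl fun j hj => ?_
          simp only [Finset.mem_Icc] at hj
          simp only [hf]
          rw [if_pos]
          intro hd
          have := Nat.le_of_dvd (by omega) hd
          omega
        -- sum over Ioc k i of f via reindexing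
        have hB : ∑ j ∈ Finset.Ioc k i, f j
            = ∑ j ∈ (Finset.Icc 1 (i - k)).filter (fun j => ¬ k ∣ j), g ((i - k) - j) := by
          have hmap : Finset.Ioc k i = (Finset.Ioc 0 (i - k)).map (addRightEmbedding k) := by
            rw [Finset.map_add_right_Ioc]
            congr 1 <;> omega
          rw [hmap, Finset.sum_map, Finset.sum_filter]
          have h1 : Finset.Icc 1 (i - k) = Finset.Ioc 0 (i - k) := by
            ext x; simp [Nat.lt_iff_add_one_le]
          rw [h1]
          refine Finset.sum_congr rfl fun j hj => ?_
          simp only [Finset.mem_Ioc] at hj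
          simp only [hf, addRightEmbedding_apply]
          have hdvd : k ∣ j + k ↔ k ∣ j := by
            constructor
            · intro hd; exact (Nat.dvd_add_right (dvd_refl k)).mp (by rwa [add_comm] at hd)
            · intro hd; exact Nat.dvd_add hd (dvd_refl k)
          have harg : i - (j + k) = i - k - j := by omega
          rw [harg]
          by_cases hc : k ∣ j
          · rw [if_neg (by simpa [hdvd]), if_neg (by simp [hc])]
          · rw [if_pos (by simpa [hdvd]), if_pos (by simp [hc])]
        rw [hsplit, hA, hB, ih (i - k) (by omega)]
        have hg : g i = ∑ j ∈ Finset.Icc 1 m, g (i - j) + g (i - k) := by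
          rw [hrec i h, hm, Finset.sum_Icc_succ_top (by omega), ← hm]
        have := gpos (i - k)
        omega
  intro i _
  exact key i
end

section
/- Every positive integer x has a representation x = Σ_{i∈S} g_i^(k) where S is a finite set of indices containing no k consecutive integers (a k-Zeckendorf representation), for the k-bonacci sequence with initial values 2^i. -/
/-!
Greedy expansion: by induction on `n`, every `x < g n` is a sum of `g i` over a run-free set of
indices below `n`. For `g n ≤ x < g (n + 1)` take `n` and expand `x - g n` below `n`; when
`k ≤ n + 1` the recursion gives `g (n + 1) - g n = ∑ i ∈ Ico (n + 1 - k) n, g i`, so the expansion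
of `x - g n` cannot contain the whole window `[n + 1 - k, n)`, which is the only way adding `n`
could create `k` consecutive indices.
-/

open Finset

structure IsKBonacci (k : ℕ) (g : ℕ → ℕ) : Prop where
  eq_two_pow : ∀ i, i < k → g i = 2 ^ i
  eq_sum : ∀ n, k ≤ n → g n = ∑ j ∈ Icc 1 k, g (n - j)

def HasRun (k : ℕ) (S : Finset ℕ) : Prop :=
  ∃ a, ∀ j, j < k → a + j ∈ S

theorem Ico_subset_of_hasRun_insert {k n : ℕ} {S : Finset ℕ} (hS : S ⊆ range n)
    (hnot : ¬ HasRun k S) (hrun : HasRun k (insert n S)) :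
    k ≤ n + 1 ∧ Ico (n + 1 - k) n ⊆ S := by
  obtain ⟨a, ha⟩ := hrun
  have mem_of_ne {j : ℕ} (hj : j < k) (hne : a + j ≠ n) : a + j ∈ S :=
    (mem_insert.mp (ha j hj)).resolve_left hne
  have hk : 0 < k := Nat.pos_of_ne_zero fun hk => hnot ⟨0, by simp [hk]⟩
  have hlast : a + (k - 1) ≤ n := by
    rcases mem_insert.mp (ha (k - 1) (by omega)) with h | h
    · omega
    · exact (mem_range.mp (hS h)).le
  have hend : a + (k - 1) = n := by
    by_contra hne
    exact hnot ⟨a, fun j hj => mem_of_ne hj (by omega)⟩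
  refine ⟨by omega, fun i hi => ?_⟩
  rw [mem_Ico] at hi
  simpa [show a + (i - a) = i by omega] using mem_of_ne (j := i - a) (by omega) (by omega)

namespace IsKBonacci

variable {k : ℕ} {g : ℕ → ℕ}

theorem eq_sum_Ico (hg : IsKBonacci k g) {n : ℕ} (hn : k ≤ n) :
    g n = ∑ i ∈ Ico (n - k) n, g i := by
  rw [hg.eq_sum n hn]
  apply sum_nbij' (fun j => n - j) (fun i => n - i) <;> intro j hj <;> simp at hj ⊢ <;> omega

theorem pos (hg : IsKBonacci k g) (hk : 0 < k) (n : ℕ) : 0 < g n := by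
  induction n using Nat.strong_induction_on with
  | _ n ih =>
    rcases lt_or_ge n k with h | h
    · rw [hg.eq_two_pow n h]; positivity
    · rw [hg.eq_sum_Ico h]
      exact sum_pos (fun i hi => ih i (mem_Ico.mp hi).2) (nonempty_Ico.mpr (by omega))

theorem succ_eq_add_sum_Ico (hg : IsKBonacci k g) (hk : 0 < k) {n : ℕ} (hn : k ≤ n + 1) :
    g (n + 1) = g n + ∑ i ∈ Ico (n + 1 - k) n, g i := by
  rw [hg.eq_sum_Ico hn, sum_Ico_succ_top (by omega), add_comm]

theorem sum_Ico_lt (hg : IsKBonacci k g) (hk : 0 < k) (n : ℕ) :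
    ∑ i ∈ Ico (n + 1 - k) n, g i < g n := by
  rcases lt_or_ge n k with h | h
  · rw [hg.eq_two_pow n h, sum_congr rfl fun i hi => hg.eq_two_pow i (by simp at hi; omega)]
    exact Nat.geomSum_lt le_rfl fun i hi => (mem_Ico.mp hi).2
  · calc ∑ i ∈ Ico (n + 1 - k) n, g i
        < g (n - k) + ∑ i ∈ Ico (n + 1 - k) n, g i := Nat.lt_add_of_pos_left (hg.pos hk _)
      _ = g n := by
        rw [hg.eq_sum_Ico h, sum_eq_sum_Ico_succ_bot (show n - k < n by omega), Nat.sub_add_comm h]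

theorem strictMono (hg : IsKBonacci k g) (hk : 2 ≤ k) : StrictMono g := by
  refine strictMono_nat_of_lt_succ fun n => ?_
  rcases lt_or_ge (n + 1) k with h | h
  · rw [hg.eq_two_pow n (by omega), hg.eq_two_pow (n + 1) h, pow_succ]
    have := Nat.two_pow_pos n
    omega
  · rw [hg.succ_eq_add_sum_Ico (by omega) h]
    exact Nat.lt_add_of_pos_right
      (sum_pos (fun i _ => hg.pos (by omega) i) (nonempty_Ico.mpr (by omega)))

theorem exists_not_hasRun_sum_eq_of_lt (hg : IsKBonacci k g) (hk : 0 < k) (n : ℕ) :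
    ∀ x < g n, ∃ S ⊆ range n, ¬ HasRun k S ∧ ∑ i ∈ S, g i = x := by
  induction n with
  | zero =>
    intro x hx
    rw [hg.eq_two_pow 0 hk, pow_zero, Nat.lt_one_iff] at hx
    exact ⟨∅, empty_subset _, fun ⟨a, ha⟩ => by simpa using ha 0 hk, by simp [hx]⟩
  | succ n ih =>
    intro x hx
    rcases lt_or_ge x (g n) with hlt | hge
    · obtain ⟨S, hS, hrun, hsum⟩ := ih x hlt
      exact ⟨S, hS.trans (range_subset_range.mpr n.le_succ), hrun, hsum⟩
    have hwindow (h : k ≤ n + 1) : x - g n < ∑ i ∈ Ico (n + 1 - k) n, g i := by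
      rw [hg.succ_eq_add_sum_Ico hk h] at hx; omega
    have hrem : x - g n < g n := by
      rcases lt_or_ge (n + 1) k with h | h
      · rw [hg.eq_two_pow (n + 1) h, pow_succ, ← hg.eq_two_pow n (by omega)] at hx; omega
      · exact (hwindow h).trans (hg.sum_Ico_lt hk n)
    obtain ⟨S, hS, hrun, hsum⟩ := ih (x - g n) hrem
    have hnS : n ∉ S := fun h => by simpa using hS h
    refine ⟨insert n S, insert_subset (by simp) (hS.trans (range_subset_range.mpr n.le_succ)),
      fun hrun' => ?_, by rw [sum_insert hnS, hsum]; omega⟩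
    obtain ⟨h, hsub⟩ := Ico_subset_of_hasRun_insert hS hrun hrun'
    exact absurd (hsum ▸ sum_le_sum_of_subset hsub) (not_le.mpr (hwindow h))

end IsKBonacci

theorem kbonacci_zeckendorf_existence (k : ℕ) (hk : 2 ≤ k) (g : ℕ → ℕ)
    (hinit : ∀ i, i < k → g i = 2 ^ i)
    (hrec : ∀ n, k ≤ n → g n = ∑ j ∈ Finset.Icc 1 k, g (n - j)) :
    ∀ x : ℕ, 0 < x →
      ∃ S : Finset ℕ, (¬ ∃ a, ∀ j, j < k → a + j ∈ S) ∧ x = ∑ i ∈ S, g i := by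
  intro x _
  have hg : IsKBonacci k g := ⟨hinit, hrec⟩
  have hx : x < g (x + 1) := x.lt_succ_self.trans_le ((hg.strictMono hk).id_le (x + 1))
  obtain ⟨S, -, hrun, hsum⟩ := hg.exists_not_hasRun_sum_eq_of_lt (by omega) (x + 1) x hx
  exact ⟨S, hrun, hsum.symm⟩
end

section
/- The k-Zeckendorf representation is unique: if S and T are finite sets of indices, each containing no k consecutive integers, and Σ_{i∈S} g_i^(k) = Σ_{i∈T} g_i^(k), then S = T. -/
theorem kbonacci_zeckendorf_unique (k : ℕ) (hk : 2 ≤ k) (g : ℕ → ℕ)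
    (hinit : ∀ i, i < k → g i = 2 ^ i)
    (hrec : ∀ n, k ≤ n → g n = ∑ j ∈ Finset.Icc 1 k, g (n - j))
    (S T : Finset ℕ)
    (hS : ¬ ∃ a, ∀ j, j < k → a + j ∈ S)
    (hT : ¬ ∃ a, ∀ j, j < k → a + j ∈ T)
    (hsum : ∑ i ∈ S, g i = ∑ i ∈ T, g i) :
    S = T := by
  have hgpos : ∀ n, 0 < g n := by
    intro n
    induction n using Nat.strong_induction_on with
    | _ n ih =>
      by_cases h : n < k
      · rw [hinit n h]; positivity
      · push_neg at h
        rw [hrec n h]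
        have h1 : 1 ∈ Finset.Icc 1 k := by simp [Finset.mem_Icc]; omega
        have h2 : g (n - 1) ≤ ∑ j ∈ Finset.Icc 1 k, g (n - j) :=
          Finset.single_le_sum (f := fun j => g (n - j)) (fun i _ => Nat.zero_le _) h1
        exact lt_of_lt_of_le (ih (n-1) (by omega)) h2
  have hgeom : ∀ n, ∑ i ∈ Finset.range n, (2:ℕ) ^ i < 2 ^ n := by
    intro n
    induction n with
    | zero => simp
    | succ m ih =>
      rw [Finset.sum_range_succ, pow_succ]
      omega
  -- key lemma
  have key : ∀ n (U : Finset ℕ), (¬ ∃ a, ∀ j, j < k → a + j ∈ U) →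
      (∀ i ∈ U, i < n) → ∑ i ∈ U, g i < g n := by
    intro n
    induction n using Nat.strong_induction_on with
    | _ n ih =>
      intro U hU hUn
      by_cases h : n < k
      · rw [hinit n h]
        calc ∑ i ∈ U, g i ≤ ∑ i ∈ Finset.range n, g i := by
              apply Finset.sum_le_sum_of_subset
              intro i hi; simpa using hUn i hi
          _ = ∑ i ∈ Finset.range n, 2 ^ i := by
              apply Finset.sum_congr rfl
              intro i hi
              exact hinit i (by simp at hi; omega)
          _ < 2 ^ n := hgeom n
      · push_neg at h
        -- some index among n-k,...,n-1 is missing from U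
        have hmiss : ∃ d, 1 ≤ d ∧ d ≤ k ∧ n - d ∉ U := by
          by_contra hc
          push_neg at hc
          apply hU
          refine ⟨n - k, fun j hj => ?_⟩
          have : n - k + j = n - (k - j) := by omega
          rw [this]
          exact hc (k - j) (by omega) (by omega)
        obtain ⟨d, hd1, hdk, hdU⟩ := hmiss
        have hnd : n - d < n := by omega
        -- split U
        have hUsplit := Finset.sum_filter_add_sum_filter_not U (fun i => i < n - d) g
        have hlow : ∑ i ∈ U.filter (fun i => i < n - d), g i < g (n - d) := by
          apply ih (n - d) hnd
          · rintro ⟨a, ha⟩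
            exact hU ⟨a, fun j hj => (Finset.mem_filter.mp (ha j hj)).1⟩
          · intro i hi
            exact (Finset.mem_filter.mp hi).2
        have hhigh : ∑ i ∈ U.filter (fun i => ¬ i < n - d), g i ≤
            ∑ i ∈ Finset.Icc (n - d + 1) (n - 1), g i := by
          apply Finset.sum_le_sum_of_subset
          intro i hi
          rw [Finset.mem_filter] at hi
          have h1 := hUn i hi.1
          have h2 : i ≠ n - d := by rintro rfl; exact hdU hi.1
          simp [Finset.mem_Icc]; omega
        -- sum over Icc (n-d) (n-1) equals sum over j ∈ Icc 1 d of g (n-j)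
        have hreidx : ∑ i ∈ Finset.Icc (n - d) (n - 1), g i =
            ∑ j ∈ Finset.Icc 1 d, g (n - j) := by
          apply Finset.sum_nbij' (fun i => n - i) (fun j => n - j)
          · intro i hi; simp [Finset.mem_Icc] at hi ⊢; omega
          · intro j hj; simp [Finset.mem_Icc] at hj ⊢; omega
          · intro i hi; simp [Finset.mem_Icc] at hi; omega
          · intro j hj; simp [Finset.mem_Icc] at hj; omega
          · intro i hi; simp [Finset.mem_Icc] at hi
            congr 1; omega
        have hins : ∑ i ∈ Finset.Icc (n - d) (n - 1), g i =
            g (n - d) + ∑ i ∈ Finset.Icc (n - d + 1) (n - 1), g i := by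
          have hset : Finset.Icc (n - d) (n - 1) =
              insert (n - d) (Finset.Icc (n - d + 1) (n - 1)) := by
            ext i; simp [Finset.mem_Icc]; omega
          rw [hset, Finset.sum_insert (by simp only [Finset.mem_Icc]; omega)]
        have hmono : ∑ j ∈ Finset.Icc 1 d, g (n - j) ≤ ∑ j ∈ Finset.Icc 1 k, g (n - j) := by
          apply Finset.sum_le_sum_of_subset
          intro j hj; simp [Finset.mem_Icc] at hj ⊢; omega
        rw [hrec n h]
        omega
  -- subsets inherit the no-k-consecutive property
  have hsub : ∀ (U V : Finset ℕ), (¬ ∃ a, ∀ j, j < k → a + j ∈ U) → V ⊆ U →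
      ¬ ∃ a, ∀ j, j < k → a + j ∈ V := by
    rintro U V hU hVU ⟨a, ha⟩
    exact hU ⟨a, fun j hj => hVU (ha j hj)⟩
  have hpos : ∀ (U : Finset ℕ), U.Nonempty → 0 < ∑ i ∈ U, g i := by
    rintro U ⟨u, hu⟩
    exact lt_of_lt_of_le (hgpos u) (Finset.single_le_sum (fun _ _ => Nat.zero_le _) hu)
  have hsum' : ∑ i ∈ S \ T, g i = ∑ i ∈ T \ S, g i := by
    have h1 := Finset.sum_inter_add_sum_sdiff S T g
    have h2 := Finset.sum_inter_add_sum_sdiff T S g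
    rw [Finset.inter_comm T S] at h2
    omega
  have case : ∀ (A B : Finset ℕ), (¬ ∃ a, ∀ j, j < k → a + j ∈ B) → Disjoint A B →
      (∑ i ∈ A, g i = ∑ i ∈ B, g i) → ∀ m ∈ A, (∀ i ∈ B, i ≤ m) → False := by
    intro A B hB hdisj heq m hm hbound
    have hBlt : ∀ i ∈ B, i < m := by
      intro i hi
      rcases lt_or_eq_of_le (hbound i hi) with h | h
      · exact h
      · exact absurd hm (by rw [h] at hi; exact Finset.disjoint_right.mp hdisj hi)
    have h1 : ∑ i ∈ B, g i < g m := key m B hB hBlt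
    have h2 : g m ≤ ∑ i ∈ A, g i := Finset.single_le_sum (fun _ _ => Nat.zero_le _) hm
    omega
  have hdisj : Disjoint (S \ T) (T \ S) := disjoint_sdiff_sdiff
  by_cases hS'e : S \ T = ∅
  · have hT'e : T \ S = ∅ := by
      by_contra hne
      have := hpos (T \ S) (Finset.nonempty_iff_ne_empty.mpr hne)
      rw [hS'e, Finset.sum_empty] at hsum'; omega
    exact Finset.Subset.antisymm (Finset.sdiff_eq_empty_iff_subset.mp hS'e)
      (Finset.sdiff_eq_empty_iff_subset.mp hT'e)
  · exfalso
    have hT'e : T \ S ≠ ∅ := by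
      intro hT'e
      have := hpos (S \ T) (Finset.nonempty_iff_ne_empty.mpr hS'e)
      rw [hT'e, Finset.sum_empty] at hsum'; omega
    have hne : ((S \ T) ∪ (T \ S)).Nonempty := by
      rw [Finset.nonempty_iff_ne_empty]
      intro h
      rw [Finset.union_eq_empty] at h
      exact hS'e h.1
    set m := ((S \ T) ∪ (T \ S)).max' hne with hmdef
    have hmmem := ((S \ T) ∪ (T \ S)).max'_mem hne
    have hmax : ∀ i ∈ (S \ T) ∪ (T \ S), i ≤ m := fun i hi => Finset.le_max' _ i hi
    rw [Finset.mem_union] at hmmem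
    rcases hmmem with hm | hm
    · exact case (S \ T) (T \ S) (hsub T (T \ S) hT Finset.sdiff_subset) hdisj hsum' m hm
        (fun i hi => hmax i (Finset.mem_union_right _ hi))
    · exact case (T \ S) (S \ T) (hsub S (S \ T) hS Finset.sdiff_subset) hdisj.symm
        hsum'.symm m hm (fun i hi => hmax i (Finset.mem_union_left _ hi))
end

section
/- The sequence (g_n^(k)) with initial values 2^i is the unique strictly increasing k-bonacci sequence (with increasing initial values U_0 < U_1 < ⋯ < U_{k−1}) such that every positive integer has a unique k-Zeckendorf representation: if (h_n) satisfies h_n = Σ_{j=1}^k h_{n−j} for n ≥ k with h_0 < h_1 < ⋯ < h_{k−1} positive integers and every positive integer has a unique representation as a sum of distinct h_i with no k consecutive indices, then h_i = 2^i for 0 ≤ i ≤ k−1, hence h_n = g_n^(k) for all n. -/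
/-!
Any sequence satisfying the k-bonacci recurrence with positive increasing initial values is
strictly increasing. Suppose `h i = 2 ^ i` for all `i < m`, where `m < k`. If `h m < 2 ^ m`, the
binary expansion of `h m` is a second admissible representation of `h m` besides `{m}`.
If `h m > 2 ^ m`, a representation of `2 ^ m` can only use indices below `m`, and distinct powers
`2 ^ i` with `i < m` sum to less than `2 ^ m`. Hence `h m = 2 ^ m`, and the recurrence propagates
the initial values.
-/

open Finset

def ContainsConsecutive (k : ℕ) (S : Finset ℕ) : Prop :=
  ∃ a, ∀ j, j < k → a + j ∈ S

def IsZeckendorfRep (k : ℕ) (h : ℕ → ℕ) (x : ℕ) (S : Finset ℕ) : Prop :=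
  ¬ ContainsConsecutive k S ∧ x = ∑ i ∈ S, h i

def IsKBonacci_s16 (k : ℕ) (h : ℕ → ℕ) : Prop :=
  ∀ n, k ≤ n → h n = ∑ j ∈ Icc 1 k, h (n - j)

lemma ContainsConsecutive.le_card {k : ℕ} {S : Finset ℕ} (hS : ContainsConsecutive k S) :
    k ≤ #S := by
  obtain ⟨a, ha⟩ := hS
  simpa using card_le_card_of_injOn (s := range k) (a + ·)
    (fun j hj => ha j (mem_range.1 hj)) (fun _ _ _ _ => Nat.add_left_cancel)

lemma exists_subset_range_sum_two_pow_eq {m x : ℕ} (hx : x < 2 ^ m) :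
    ∃ S ⊆ range m, ∑ i ∈ S, 2 ^ i = x :=
  ⟨x.bitIndices.toFinset,
    fun _ hi => mem_range.2 <| (Nat.pow_lt_pow_iff_right (by norm_num)).1 <|
      (Nat.two_pow_le_of_mem_bitIndices (List.mem_toFinset.1 hi)).trans_lt hx,
    sum_toFinset_bitIndices_two_pow x⟩

namespace IsKBonacci_s16

variable {k : ℕ} {h : ℕ → ℕ}

lemma pos_s16 (hrec : IsKBonacci_s16 k h) (hk : 0 < k) (h0 : 0 < h 0)
    (hmono : ∀ i, i + 1 < k → h i < h (i + 1)) (n : ℕ) : 0 < h n := by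
  induction n using Nat.strong_induction_on with
  | _ n ih =>
    rcases lt_or_ge n k with hn | hn
    · cases n with
      | zero => exact h0
      | succ m => exact (ih m (by omega)).trans (hmono m hn)
    · rw [hrec n hn]
      exact sum_pos (fun j hj => ih (n - j) (by grind))
        ⟨1, mem_Icc.2 ⟨le_rfl, hk⟩⟩

lemma strictMono_s16 (hrec : IsKBonacci_s16 k h) (hk : 2 ≤ k) (h0 : 0 < h 0)
    (hmono : ∀ i, i + 1 < k → h i < h (i + 1)) : StrictMono h := by
  refine strictMono_nat_of_lt_succ fun n => ?_
  rcases lt_or_ge (n + 1) k with hn | hn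
  · exact hmono n hn
  · have hpair : ({1, 2} : Finset ℕ) ⊆ Icc 1 k := by
      intro j hj
      simp only [mem_insert, mem_singleton] at hj
      exact mem_Icc.2 (by omega)
    calc h n < h n + h (n - 1) := Nat.lt_add_of_pos_right (hrec.pos_s16 (by omega) h0 hmono _)
      _ = ∑ j ∈ {1, 2}, h (n + 1 - j) := by simp
      _ ≤ ∑ j ∈ Icc 1 k, h (n + 1 - j) := sum_le_sum_of_subset hpair
      _ = h (n + 1) := (hrec (n + 1) hn).symm

lemma eq_of_forall_lt {g : ℕ → ℕ} (hh : IsKBonacci_s16 k h) (hg : IsKBonacci_s16 k g)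
    (hinit : ∀ i, i < k → h i = g i) (n : ℕ) : h n = g n := by
  induction n using Nat.strong_induction_on with
  | _ n ih =>
    rcases lt_or_ge n k with hn | hn
    · exact hinit n hn
    · rw [hh n hn, hg n hn]
      exact sum_congr rfl fun j hj => ih (n - j) (by grind)

end IsKBonacci_s16

section PowersOfTwo

variable {k m : ℕ} {h : ℕ → ℕ}

lemma two_pow_le_of_existsUnique_rep (hk : 1 < k) (hm : m < k)
    (hlt : ∀ i, i < m → h i = 2 ^ i) (huniq : ∃! S, IsZeckendorfRep k h (h m) S) :
    2 ^ m ≤ h m := by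
  by_contra! hsmall
  obtain ⟨S, hSm, hS⟩ := exists_subset_range_sum_two_pow_eq hsmall
  have hbinary : IsZeckendorfRep k h (h m) S := by
    refine ⟨fun hc => ?_, ?_⟩
    · have := (card_le_card hSm).trans_eq (card_range m)
      have := hc.le_card
      omega
    · rw [← hS]
      exact sum_congr rfl fun i hi => (hlt i (mem_range.1 (hSm hi))).symm
  have hsingle : IsZeckendorfRep k h (h m) {m} :=
    ⟨fun hc => by simpa using hc.le_card.trans_lt' hk, by simp⟩
  exact notMem_range_self (hSm (huniq.unique hbinary hsingle ▸ mem_singleton_self m))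

lemma le_two_pow_of_sum_eq_two_pow (hh : Monotone h) (hlt : ∀ i, i < m → h i = 2 ^ i)
    {S : Finset ℕ} (hS : 2 ^ m = ∑ i ∈ S, h i) : h m ≤ 2 ^ m := by
  obtain ⟨i, hiS, hmi⟩ : ∃ i ∈ S, m ≤ i := by
    by_contra! hS_lt
    have hsum : ∑ i ∈ S, h i = ∑ i ∈ S, 2 ^ i := sum_congr rfl fun i hi => hlt i (hS_lt i hi)
    exact (Nat.geomSum_lt le_rfl hS_lt).ne (hsum ▸ hS).symm
  calc h m ≤ h i := hh hmi
    _ ≤ ∑ j ∈ S, h j := single_le_sum (fun _ _ => Nat.zero_le _) hiS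
    _ = 2 ^ m := hS.symm

theorem eq_two_pow_of_existsUnique_rep (hk : 1 < k) (hh : Monotone h) (h0 : 0 < h 0)
    (hrep : ∀ x, 0 < x → ∃! S, IsZeckendorfRep k h x S) : ∀ m, m < k → h m = 2 ^ m := by
  intro m
  induction m using Nat.strong_induction_on with
  | _ m ih =>
    intro hm
    have hlt : ∀ i, i < m → h i = 2 ^ i := fun i hi => ih i hi (hi.trans hm)
    obtain ⟨S, ⟨-, hS⟩, -⟩ := hrep (2 ^ m) (Nat.two_pow_pos m)
    exact le_antisymm (le_two_pow_of_sum_eq_two_pow hh hlt hS)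
      (two_pow_le_of_existsUnique_rep hk hm hlt (hrep _ (h0.trans_le (hh m.zero_le))))

end PowersOfTwo

theorem kbonacci_unique_sequence (k : ℕ) (hk : 2 ≤ k) (g : ℕ → ℕ)
    (hinit : ∀ i, i < k → g i = 2 ^ i)
    (hrec : ∀ n, k ≤ n → g n = ∑ j ∈ Finset.Icc 1 k, g (n - j))
    (h : ℕ → ℕ)
    (hpos : 0 < h 0)
    (hmono : ∀ i, i + 1 < k → h i < h (i + 1))
    (hhrec : ∀ n, k ≤ n → h n = ∑ j ∈ Finset.Icc 1 k, h (n - j))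
    (hrep : ∀ x : ℕ, 0 < x →
      ∃! S : Finset ℕ, (¬ ∃ a, ∀ j, j < k → a + j ∈ S) ∧ x = ∑ i ∈ S, h i) :
    (∀ i, i < k → h i = 2 ^ i) ∧ ∀ n, h n = g n := by
  have hh : IsKBonacci_s16 k h := hhrec
  have hpow : ∀ i, i < k → h i = 2 ^ i :=
    eq_two_pow_of_existsUnique_rep (by omega) (hh.strictMono_s16 hk hpos hmono).monotone hpos hrep
  exact ⟨hpow, hh.eq_of_forall_lt hrec fun i hi => (hpow i hi).trans (hinit i hi).symm⟩
end
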